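/- arXiv:1404.6026 — 2 statements merged into one kernel-verified Lean document; each statement's English description precedes it below -/
import Mathlib

section
/- Let h : ℝⁿ → ℝ be continuously differentiable with gradient L-Lipschitz on the ball B(τ), let σ : ℝⁿ → (-∞,+∞] be proper lower semicontinuous with finite infimum, and fix t > L. If u⁺ minimizes x ↦ σ(x) + ⟨x - u, ∇h(u)⟩ + (t/2)‖x - u‖² and both u and u⁺ lie in B(τ), then h(u⁺) + σ(u⁺) ≤ h(u) + σ(u) - ((t - L)/2)‖u⁺ - u‖². -/
/-!
Testing the minimality of `u⁺` at `x = u` gives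
`σ u⁺ + ⟪∇h u, u⁺ - u⟫ + (t/2)‖u⁺ - u‖² ≤ σ u`, and the descent lemma on the convex ball gives
`h u⁺ ≤ h u + ⟪∇h u, u⁺ - u⟫ + (L/2)‖u⁺ - u‖²`. Adding the two yields the claim; in `EReal`
the addition of real numbers is monotone, so the infinite values of `σ` cause no trouble.
-/

open Real Set Metric RealInnerProductSpace

variable {F : Type*} [NormedAddCommGroup F] [InnerProductSpace ℝ F] [CompleteSpace F]

theorem HasGradientAt.hasDerivAt_add_smul {f : F → ℝ} {g x d : F} {r : ℝ}
    (hf : HasGradientAt f g (x + r • d)) : HasDerivAt (fun r : ℝ => f (x + r • d)) ⟪g, d⟫ r := by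
  have hline : HasDerivAt (fun r : ℝ => x + r • d) d r := by
    simpa using ((hasDerivAt_id r).smul_const d).const_add x
  exact (hasGradientAt_iff_hasFDerivAt.mp hf).comp_hasDerivAt r hline

theorem Convex.le_add_inner_add_sq_of_gradient_lipschitz {s : Set F} (hs : Convex ℝ s)
    {f : F → ℝ} {f' : F → F} {L : ℝ} (hf : ∀ x ∈ s, HasGradientAt f (f' x) x)
    (hlip : ∀ x ∈ s, ∀ y ∈ s, ‖f' x - f' y‖ ≤ L * ‖x - y‖) {x y : F} (hx : x ∈ s) (hy : y ∈ s) :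
    f y ≤ f x + ⟪f' x, y - x⟫ + L / 2 * ‖y - x‖ ^ 2 := by
  set d := y - x
  have hseg : ∀ r ∈ Icc (0 : ℝ) 1, x + r • d ∈ s := fun r hr => hs.add_smul_sub_mem hx hy hr
  -- `φ` has derivative `⟪f' (x + r • d) - f' x, d⟫ - L r ‖d‖² ≤ 0`, so `φ 1 ≤ φ 0` is the claim.
  set φ : ℝ → ℝ := fun r => f (x + r • d) - r * ⟪f' x, d⟫ - L / 2 * r ^ 2 * ‖d‖ ^ 2
  have hφ : ∀ r ∈ Icc (0 : ℝ) 1,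
      HasDerivAt φ (⟪f' (x + r • d), d⟫ - ⟪f' x, d⟫ - L * r * ‖d‖ ^ 2) r := by
    intro r hr
    have hlin := (hf _ (hseg r hr)).hasDerivAt_add_smul
    refine ((hlin.sub ((hasDerivAt_id r).mul_const ⟪f' x, d⟫)).sub
      (((hasDerivAt_pow 2 r).const_mul (L / 2)).mul_const (‖d‖ ^ 2))).congr_deriv ?_
    simp only [Nat.cast_ofNat, Nat.add_one_sub_one, pow_one, one_mul]
    ring
  have hφ_nonpos : ∀ r ∈ Icc (0 : ℝ) 1, ⟪f' (x + r • d), d⟫ - ⟪f' x, d⟫ - L * r * ‖d‖ ^ 2 ≤ 0 := by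
    intro r hr
    rw [sub_nonpos]
    have hstep : ‖x + r • d - x‖ = r * ‖d‖ := by
      rw [add_sub_cancel_left, norm_smul, Real.norm_of_nonneg hr.1]
    calc ⟪f' (x + r • d), d⟫ - ⟪f' x, d⟫ = ⟪f' (x + r • d) - f' x, d⟫ := (inner_sub_left ..).symm
      _ ≤ ‖f' (x + r • d) - f' x‖ * ‖d‖ := real_inner_le_norm _ _
      _ ≤ L * ‖x + r • d - x‖ * ‖d‖ := by gcongr; exact hlip _ (hseg r hr) _ hx
      _ = L * r * ‖d‖ ^ 2 := by rw [hstep]; ring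
  have hanti : AntitoneOn φ (Icc 0 1) :=
    antitoneOn_of_hasDerivWithinAt_nonpos (convex_Icc 0 1)
      (fun r hr => (hφ r hr).continuousAt.continuousWithinAt)
      (fun r hr => (hφ r (interior_subset hr)).hasDerivWithinAt)
      (fun r hr => hφ_nonpos r (interior_subset hr))
  have hφ_le := hanti (left_mem_Icc.mpr zero_le_one) (right_mem_Icc.mpr zero_le_one) zero_le_one
  simp only [φ, d, one_smul, add_sub_cancel, one_mul, one_pow, mul_one, zero_smul, add_zero,
    zero_mul, sub_zero, ne_eq, OfNat.ofNat_ne_zero, not_false_eq_true, zero_pow, mul_zero,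
    tsub_le_iff_right] at hφ_le
  linarith

theorem EReal.coe_add_le_coe_add_sub {a b c k : ℝ} {x y : EReal} (hxy : x + c ≤ y)
    (habc : a ≤ b + c - k) : (a : EReal) + x ≤ b + y - k := by
  calc (a : EReal) + x ≤ ((b - k + c : ℝ) : EReal) + x := by gcongr; exact_mod_cast (by linarith)
    _ = ((b - k : ℝ) : EReal) + (x + c) := by rw [EReal.coe_add]; ac_rfl
    _ ≤ ((b - k : ℝ) : EReal) + y := by gcongr
    _ = b + y - k := by rw [EReal.coe_sub, sub_eq_add_neg, sub_eq_add_neg]; ac_rfl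

theorem stmt_3_general {n : ℕ} (h : EuclideanSpace ℝ (Fin n) → ℝ)
    (σ : EuclideanSpace ℝ (Fin n) → EReal) (L τ t : ℝ)
    (hsmooth : ContDiff ℝ 1 h)
    (hlip : ∀ u ∈ Metric.closedBall (0 : EuclideanSpace ℝ (Fin n)) τ,
      ∀ v ∈ Metric.closedBall (0 : EuclideanSpace ℝ (Fin n)) τ,
        ‖gradient h u - gradient h v‖ ≤ L * ‖u - v‖)
    (u uplus : EuclideanSpace ℝ (Fin n))
    (hu : u ∈ Metric.closedBall (0 : EuclideanSpace ℝ (Fin n)) τ)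
    (huplus : uplus ∈ Metric.closedBall (0 : EuclideanSpace ℝ (Fin n)) τ)
    (hmin : ∀ x, σ uplus + ((⟪gradient h u, uplus - u⟫ + t / 2 * ‖uplus - u‖ ^ 2 : ℝ) : EReal)
      ≤ σ x + ((⟪gradient h u, x - u⟫ + t / 2 * ‖x - u‖ ^ 2 : ℝ) : EReal)) :
    ((h uplus : ℝ) : EReal) + σ uplus
      ≤ ((h u : ℝ) : EReal) + σ u - (((t - L) / 2 * ‖uplus - u‖ ^ 2 : ℝ) : EReal) := by
  have hdescent :=
    (convex_closedBall (0 : EuclideanSpace ℝ (Fin n)) τ).le_add_inner_add_sq_of_gradient_lipschitz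
      (fun x _ => (hsmooth.differentiable one_ne_zero x).hasGradientAt) hlip hu huplus
  have hmin_at_u := hmin u
  rw [sub_self, inner_zero_right, norm_zero, zero_pow two_ne_zero, mul_zero, add_zero,
    EReal.coe_zero, add_zero] at hmin_at_u
  refine EReal.coe_add_le_coe_add_sub hmin_at_u ?_
  linarith

theorem stmt_3 {n : ℕ} (h : EuclideanSpace ℝ (Fin n) → ℝ)
    (σ : EuclideanSpace ℝ (Fin n) → EReal) (L τ t : ℝ)
    (hL : 0 < L) (hτ : 0 < τ) (hsmooth : ContDiff ℝ 1 h)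
    (hlip : ∀ u ∈ Metric.closedBall (0 : EuclideanSpace ℝ (Fin n)) τ,
      ∀ v ∈ Metric.closedBall (0 : EuclideanSpace ℝ (Fin n)) τ,
        ‖gradient h u - gradient h v‖ ≤ L * ‖u - v‖)
    (hσ_ne_bot : ∀ x, σ x ≠ ⊥) (hσ_proper : ∃ x, σ x ≠ ⊤)
    (hσ_lsc : LowerSemicontinuous σ)
    (hσ_inf : ∃ b : ℝ, ∀ x, (b : EReal) ≤ σ x)
    (ht : L < t)
    (u uplus : EuclideanSpace ℝ (Fin n))
    (hu : u ∈ Metric.closedBall (0 : EuclideanSpace ℝ (Fin n)) τ)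
    (huplus : uplus ∈ Metric.closedBall (0 : EuclideanSpace ℝ (Fin n)) τ)
    (hmin : ∀ x, σ uplus + ((⟪gradient h u, uplus - u⟫ + t / 2 * ‖uplus - u‖ ^ 2 : ℝ) : EReal)
      ≤ σ x + ((⟪gradient h u, x - u⟫ + t / 2 * ‖x - u‖ ^ 2 : ℝ) : EReal)) :
    ((h uplus : ℝ) : EReal) + σ uplus
      ≤ ((h u : ℝ) : EReal) + σ u - (((t - L) / 2 * ‖uplus - u‖ ^ 2 : ℝ) : EReal) :=
  stmt_3_general h σ L τ t hsmooth hlip u uplus hu huplus hmin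
end

section
/- Let (a_k) be a sequence of nonnegative reals and suppose there exist c > 0 and nonnegative reals Δ_k with Σ_k Δ_k < ∞ such that 2 a_{k+1} ≤ a_k + c Δ_k for all k ≥ 1. Then Σ_{k=1}^∞ a_k < ∞. -/
/-!
Halving the recursion, `a (k + 1) ≤ a k / 2 + (c / 2) Δ k` on the tail `k ≥ 1`. For any recursion
`b (k + 1) ≤ r b k + e k` with `b ≥ 0`, `r < 1` (replace `r` by `max r 0`) and `∑ e` convergent,
the partial sums `S n` of `b` satisfy `S (n + 1) ≤ b 0 + r S (n + 1) + M`, where `M` bounds the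
partial sums of `e`; hence `S n ≤ (b 0 + M) / (1 - r)`.
-/

open Finset

theorem summable_of_succ_le_mul_add {b e : ℕ → ℝ} {r : ℝ} (hb : ∀ k, 0 ≤ b k) (hr : r < 1)
    (he : Summable e) (hrec : ∀ k, b (k + 1) ≤ r * b k + e k) : Summable b := by
  obtain ⟨M, hM⟩ := he.hasSum.tendsto_sum_nat.bddAbove_range
  have hM' : ∀ n, ∑ k ∈ range n, e k ≤ M := fun n => hM ⟨n, rfl⟩
  set r' := max r 0
  have hrec' : ∀ k, b (k + 1) ≤ r' * b k + e k := fun k =>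
    (hrec k).trans (by gcongr; exacts [hb k, le_max_left _ _])
  have hsucc : ∀ n, ∑ k ∈ range (n + 1), b k ≤ (b 0 + M) / (1 - r') := by
    intro n
    have hmono : ∑ k ∈ range n, b k ≤ ∑ k ∈ range (n + 1), b k :=
      sum_le_sum_of_subset_of_nonneg (range_subset_range.mpr n.le_succ) fun k _ _ => hb k
    have hshift : ∑ k ∈ range n, b (k + 1) ≤ r' * ∑ k ∈ range n, b k + ∑ k ∈ range n, e k := by
      rw [mul_sum, ← sum_add_distrib]
      exact sum_le_sum fun k _ => hrec' k
    have hbound : ∑ k ∈ range (n + 1), b k ≤ b 0 + r' * ∑ k ∈ range (n + 1), b k + M := by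
      have hscale := mul_le_mul_of_nonneg_left hmono (le_max_right r 0)
      rw [sum_range_succ' b n] at hscale ⊢
      linarith [hM' n]
    rw [le_div_iff₀ (sub_pos.mpr (max_lt hr zero_lt_one))]
    linarith
  refine summable_of_sum_range_le (c := (b 0 + M) / (1 - r')) hb fun n => ?_
  cases n with
  | zero => simpa using (sum_nonneg fun k _ => hb k).trans (hsucc 0)
  | succ n => exact hsucc n

theorem stmt_12_general (a Δ : ℕ → ℝ) (c : ℝ)
    (ha : ∀ k, 0 ≤ a k) (hΔsum : Summable Δ)
    (hrec : ∀ k ≥ 1, 2 * a (k + 1) ≤ a k + c * Δ k) :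
    Summable a := by
  have hΔtail : Summable fun k => c / 2 * Δ (k + 1) :=
    ((summable_nat_add_iff 1).mpr hΔsum).mul_left (c / 2)
  have htail : Summable fun k => a (k + 1) :=
    summable_of_succ_le_mul_add (fun k => ha (k + 1)) (by norm_num : (1 / 2 : ℝ) < 1) hΔtail
      fun k => by linarith [hrec (k + 1) (Nat.le_add_left 1 k)]
  exact (summable_nat_add_iff 1).mp htail

theorem stmt_12 (a Δ : ℕ → ℝ) (c : ℝ) (hc : 0 < c)
    (ha : ∀ k, 0 ≤ a k) (hΔ : ∀ k, 0 ≤ Δ k) (hΔsum : Summable Δ)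
    (hrec : ∀ k ≥ 1, 2 * a (k + 1) ≤ a k + c * Δ k) :
    Summable a :=
  stmt_12_general a Δ c ha hΔsum hrec
end
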